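/- Let d ≥ 1 and let V satisfy Assumption (A). Let φ be the Hamiltonian flow of p. Then for every T > 0 and every integer k ≥ 1, one has sup_{t ∈ [0, T]} sup_{ρ ∈ ℝ^{2d}} ‖D^k_ρ φ^t(ρ)‖ < ∞. In particular, the map φ^t : ℝ^{2d} → ℝ^{2d} is Lipschitz with a Lipschitz constant uniform in t ∈ [0, T]. -/

import Mathlib

open Real MeasureTheory

noncomputable section

abbrev E (d : ℕ) := EuclideanSpace ℝ (Fin d)

/-- Assumption (A): `V` is smooth, nonnegative, comparable to `⟨x⟩^{2m}` with `m ∈ (0,1]`,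
with derivative bounds `‖D^k V(x)‖ ≤ C_k ⟨x⟩^{2m-k}`. Here `⟨x⟩^s = (1+‖x‖²)^{s/2}`. -/
def AssumptionA {d : ℕ} (V : E d → ℝ) (m : ℝ) : Prop :=
  ContDiff ℝ (⊤ : ℕ∞) V ∧ (∀ x, 0 ≤ V x) ∧ 0 < m ∧ m ≤ 1 ∧
  (∃ C > 0, ∀ x : E d, C⁻¹ * (1 + ‖x‖ ^ 2) ^ m - C ≤ V x ∧ V x ≤ C * (1 + ‖x‖ ^ 2) ^ m) ∧
  (∀ k : ℕ, ∃ Ck > 0, ∀ x : E d,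
    ‖iteratedFDeriv ℝ k V x‖ ≤ Ck * (1 + ‖x‖ ^ 2) ^ (m - (k : ℝ) / 2))

/-- The classical Hamiltonian `p(x,ξ) = ½|ξ|² + V(x)`. -/
def ham {d : ℕ} (V : E d → ℝ) (ρ : E d × E d) : ℝ := (1 / 2) * ‖ρ.2‖ ^ 2 + V ρ.1

/-- The Hamiltonian flow of `p`: smooth in `(t,ρ)`, `φ⁰ = id`, and
`d/dt φᵗ(x,ξ) = (ξᵗ, -∇V(xᵗ))`. -/
def IsHamFlow {d : ℕ} (V : E d → ℝ) (φ : ℝ → E d × E d → E d × E d) : Prop :=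
  ContDiff ℝ (⊤ : ℕ∞) (fun q : ℝ × (E d × E d) => φ q.1 q.2) ∧
  (∀ ρ, φ 0 ρ = ρ) ∧
  (∀ t ρ, HasDerivAt (fun s => φ s ρ) ((φ t ρ).2, -(gradient V (φ t ρ).1)) t)

/- ======================= Auxiliary material ======================= -/

set_option maxHeartbeats 1000000

namespace Stmt4Aux

variable {P W : Type*} [NormedAddCommGroup P] [NormedSpace ℝ P]
  [NormedAddCommGroup W] [NormedSpace ℝ W]

/-- Norm of the `j`-th iterated derivative of a continuous linear map is at most its norm,
for `j ≥ 1`. -/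
lemma norm_iteratedFDeriv_clm_le (A : P →L[ℝ] W) {j : ℕ} (hj : 1 ≤ j) (y : P) :
    ‖iteratedFDeriv ℝ j (⇑A) y‖ ≤ ‖A‖ := by
  obtain ⟨i, rfl⟩ : ∃ i, j = i + 1 := ⟨j - 1, (Nat.succ_pred_eq_of_pos hj).symm⟩
  rw [← norm_iteratedFDeriv_fderiv]
  have hf : fderiv ℝ (⇑A) = fun _ : P => A := funext fun x => A.fderiv
  rw [hf]
  rcases Nat.eq_zero_or_pos i with hi | hi
  · subst hi
    rw [norm_iteratedFDeriv_zero]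
  · rw [iteratedFDeriv_const_of_ne (Nat.pos_iff_ne_zero.mp hi)]
    simp

lemma norm_iteratedFDeriv_one' (f : P → W) (x : P) :
    ‖iteratedFDeriv ℝ 1 f x‖ = ‖fderiv ℝ f x‖ := by
  have h := norm_iteratedFDeriv_fderiv (𝕜 := ℝ) (f := f) (x := x) (n := 0)
  rw [norm_iteratedFDeriv_zero] at h
  exact h.symm

lemma hasFDerivAt_slice (s : ℝ) (y : P) :
    HasFDerivAt (fun y' : P => ((s, y') : ℝ × P))
      ((0 : P →L[ℝ] ℝ).prod (ContinuousLinearMap.id ℝ P)) y :=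
  (hasFDerivAt_const s y).prodMk (hasFDerivAt_id y)

lemma pfderiv_eq {B : ℝ × P → W} (hB : ContDiff ℝ (⊤ : ℕ∞) B) (s : ℝ) (y : P) :
    fderiv ℝ (fun y' => B (s, y')) y =
      (fderiv ℝ B (s, y)).comp ((0 : P →L[ℝ] ℝ).prod (ContinuousLinearMap.id ℝ P)) :=
  (((hB.differentiable (by simp)) (s, y)).hasFDerivAt.comp y (hasFDerivAt_slice s y)).fderiv

/-- Clairaut-type swap: the time derivative of a space derivative is the space derivative
of the time derivative, for a jointly smooth function. -/
lemma swap_partial {B C : ℝ × P → W} (hB : ContDiff ℝ (⊤ : ℕ∞) B)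
    (h : ∀ t ρ, HasDerivAt (fun s => B (s, ρ)) (C (t, ρ)) t) (t : ℝ) (ρ : P) :
    HasDerivAt (fun s => fderiv ℝ (fun y => B (s, y)) ρ)
      (fderiv ℝ (fun y => C (t, y)) ρ) t := by
  set J : P →L[ℝ] ℝ × P := (0 : P →L[ℝ] ℝ).prod (ContinuousLinearMap.id ℝ P) with hJdef
  have hBd : Differentiable ℝ B := hB.differentiable (by simp)
  have hD : ContDiff ℝ (⊤ : ℕ∞) (fderiv ℝ B) := hB.fderiv_right (by simp)
  have hDd : Differentiable ℝ (fderiv ℝ B) := hD.differentiable (by simp)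
  set D : ℝ × P → (ℝ × P) →L[ℝ] W := fderiv ℝ B with hDdef
  set Efull : (ℝ × P) →L[ℝ] (ℝ × P) →L[ℝ] W := fderiv ℝ D (t, ρ) with hEdef
  have hCeq : ∀ s y, C (s, y) = D (s, y) (1, 0) := by
    intro s y
    have h1 : HasDerivAt (fun s' => B (s', y)) (D (s, y) (1, 0)) s :=
      (hBd (s, y)).hasFDerivAt.comp_hasDerivAt s
        ((hasDerivAt_id s).prodMk (hasDerivAt_const s y))
    exact (h s y).unique h1
  have hDt : HasDerivAt (fun s => D (s, ρ)) (Efull (1, 0)) t :=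
    (hDd (t, ρ)).hasFDerivAt.comp_hasDerivAt t
      ((hasDerivAt_id t).prodMk (hasDerivAt_const t ρ))
  set Ψ : ((ℝ × P) →L[ℝ] W) →L[ℝ] (P →L[ℝ] W) :=
    (ContinuousLinearMap.compL ℝ P (ℝ × P) W).flip J with hΨdef
  have hMain : HasDerivAt (fun s => Ψ (D (s, ρ))) (Ψ (Efull (1, 0))) t :=
    Ψ.hasFDerivAt.comp_hasDerivAt t hDt
  have hfun : (fun s => fderiv ℝ (fun y => B (s, y)) ρ) = fun s => Ψ (D (s, ρ)) := by
    funext s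
    rw [pfderiv_eq hB s ρ]
    simp [hΨdef, ContinuousLinearMap.flip_apply, ContinuousLinearMap.compL_apply]
    rfl
  set Λ : ((ℝ × P) →L[ℝ] W) →L[ℝ] W :=
    ContinuousLinearMap.apply ℝ W ((1 : ℝ), (0 : P)) with hΛdef
  have hDt2 : HasFDerivAt (fun y => D (t, y)) (Efull.comp J) ρ :=
    (hDd (t, ρ)).hasFDerivAt.comp ρ (hasFDerivAt_slice t ρ)
  have hC2 : HasFDerivAt (fun y => C (t, y)) (Λ.comp (Efull.comp J)) ρ := by
    have hfun2 : (fun y => C (t, y)) = fun y => Λ (D (t, y)) := by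
      funext y; rw [hCeq t y]; simp [hΛdef]
    rw [hfun2]
    exact Λ.hasFDerivAt.comp ρ hDt2
  have hval : fderiv ℝ (fun y => C (t, y)) ρ = Ψ (Efull (1, 0)) := by
    rw [hC2.fderiv]
    ext v
    have hsymm := second_derivative_symmetric (fun y => (hBd y).hasFDerivAt)
      ((hDd (t, ρ)).hasFDerivAt) ((0 : ℝ), v) ((1 : ℝ), (0 : P))
    simp [hΛdef, hΨdef, ContinuousLinearMap.flip_apply, ContinuousLinearMap.compL_apply,
      hJdef]
    simpa using hsymm
  rw [hfun, hval]
  exact hMain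

lemma contDiff_pfderiv {B : ℝ × P → W} (hB : ContDiff ℝ (⊤ : ℕ∞) B) :
    ContDiff ℝ (⊤ : ℕ∞) (fun q : ℝ × P => fderiv ℝ (fun y => B (q.1, y)) q.2) :=
  ContDiff.fderiv (f := fun (q : ℝ × P) (y : P) => B (q.1, y)) (g := Prod.snd)
    (hB.comp ((contDiff_fst.comp contDiff_fst).prodMk contDiff_snd)) contDiff_snd (by simp)

lemma contDiff_piter {B : ℝ × P → W} (hB : ContDiff ℝ (⊤ : ℕ∞) B) (n : ℕ) :
    ContDiff ℝ (⊤ : ℕ∞) (fun q : ℝ × P => iteratedFDeriv ℝ n (fun y => B (q.1, y)) q.2) := by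
  induction n with
  | zero =>
    exact ((continuousMultilinearCurryFin0 ℝ P
      W).symm.toContinuousLinearEquiv.toContinuousLinearMap.contDiff).comp hB
  | succ n IH =>
    exact ((continuousMultilinearCurryLeftEquiv ℝ (fun _ : Fin (n+1) => P)
      W).symm.toContinuousLinearEquiv.toContinuousLinearMap.contDiff).comp (contDiff_pfderiv IH)

/-- Iterated swap of time and space derivatives. -/
lemma swap_iter {B C : ℝ × P → W} (hB : ContDiff ℝ (⊤ : ℕ∞) B)
    (h : ∀ t ρ, HasDerivAt (fun s => B (s, ρ)) (C (t, ρ)) t) :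
    ∀ (n : ℕ) (t : ℝ) (ρ : P),
      HasDerivAt (fun s => iteratedFDeriv ℝ n (fun y => B (s, y)) ρ)
        (iteratedFDeriv ℝ n (fun y => C (t, y)) ρ) t := by
  intro n
  induction n with
  | zero =>
    intro t ρ
    exact ((continuousMultilinearCurryFin0 ℝ P
      W).symm.toContinuousLinearEquiv.toContinuousLinearMap.hasFDerivAt).comp_hasDerivAt t (h t ρ)
  | succ n IH =>
    intro t ρ
    have hBn : ContDiff ℝ (⊤ : ℕ∞)
        (fun q : ℝ × P => iteratedFDeriv ℝ n (fun y => B (q.1, y)) q.2) := contDiff_piter hB n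
    have hs := swap_partial (B := fun q : ℝ × P => iteratedFDeriv ℝ n (fun y => B (q.1, y)) q.2)
      (C := fun q : ℝ × P => iteratedFDeriv ℝ n (fun y => C (q.1, y)) q.2)
      hBn (fun t' ρ' => IH t' ρ') t ρ
    exact ((continuousMultilinearCurryLeftEquiv ℝ (fun _ : Fin (n+1) => P)
      W).symm.toContinuousLinearEquiv.toContinuousLinearMap.hasFDerivAt).comp_hasDerivAt t hs

/-- The key estimate: the `(n+1)`-st derivative of `F ∘ g` is bounded linearly in terms of the
`(n+1)`-st derivative of `g`, with coefficients depending only on bounds for the derivatives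
of `F` and lower-order derivatives of `g`. -/
lemma star {F : P → P} (hF : ContDiff ℝ (⊤ : ℕ∞) F) (n : ℕ) {CG M : ℝ}
    (hCG1 : 1 ≤ CG) (hM : 1 ≤ M)
    (hCG : ∀ i : ℕ, i ≤ n → ∀ y : P, ‖iteratedFDeriv ℝ i (fderiv ℝ F) y‖ ≤ CG) :
    ∀ g : P → P, ContDiff ℝ (⊤ : ℕ∞) g → ∀ ρ₀ : P,
      (∀ j : ℕ, 1 ≤ j → j ≤ n → ‖iteratedFDeriv ℝ j g ρ₀‖ ≤ M) →
      ‖iteratedFDeriv ℝ (n + 1) (fun y => F (g y)) ρ₀‖ ≤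
        CG * ‖iteratedFDeriv ℝ (n + 1) g ρ₀‖ +
          ∑ i ∈ Finset.range (n + 1), (n.choose i : ℝ) * ((i.factorial : ℝ) * CG * M ^ i) * M := by
  have hCG0 : (0 : ℝ) ≤ CG := by linarith
  have hM0 : (0 : ℝ) ≤ M := by linarith
  intro g hg ρ₀ hlow
  have hGsm : ContDiff ℝ (⊤ : ℕ∞) (fderiv ℝ F) := hF.fderiv_right (by simp)
  have hgd : Differentiable ℝ g := hg.differentiable (by simp)
  have hFd : Differentiable ℝ F := hF.differentiable (by simp)
  set G : P → (P →L[ℝ] P) := fderiv ℝ F with hGdef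
  set u : P → (P →L[ℝ] P) := fun x => G (g x) with hudef
  set v : P → (P →L[ℝ] P) := fun x => fderiv ℝ g x with hvdef
  have husm : ContDiff ℝ (⊤ : ℕ∞) u := hGsm.comp hg
  have hvsm : ContDiff ℝ (⊤ : ℕ∞) v := hg.fderiv_right (by simp)
  set B := ContinuousLinearMap.compL ℝ P P P with hBdef
  have hfe : fderiv ℝ (fun y => F (g y)) =
      fun x => B (u x - u ρ₀) (v x) + (⇑(B (u ρ₀)) ∘ v) x := by
    funext x
    have h1 : fderiv ℝ (fun y => F (g y)) x = (G (g x)).comp (v x) :=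
      ((hFd (g x)).hasFDerivAt.comp x (hgd x).hasFDerivAt).fderiv
    rw [h1]
    simp only [Function.comp_apply, map_sub, ContinuousLinearMap.sub_apply, sub_add_cancel]
    rw [ContinuousLinearMap.compL_apply]
  have h1sm : ContDiff ℝ (n : ℕ) (fun x => B (u x - u ρ₀) (v x)) :=
    ((B.contDiff.comp (husm.sub contDiff_const)).clm_apply hvsm).of_le (by exact_mod_cast le_top)
  have h2sm : ContDiff ℝ (n : ℕ) (⇑(B (u ρ₀)) ∘ v) :=
    ((B (u ρ₀)).contDiff.comp hvsm).of_le (by exact_mod_cast le_top)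
  have key : ‖iteratedFDeriv ℝ (n + 1) (fun y => F (g y)) ρ₀‖ =
      ‖iteratedFDeriv ℝ n (fun x => B (u x - u ρ₀) (v x)) ρ₀ +
        iteratedFDeriv ℝ n (⇑(B (u ρ₀)) ∘ v) ρ₀‖ := by
    rw [← norm_iteratedFDeriv_fderiv, hfe, ← iteratedFDeriv_add_apply' h1sm.contDiffAt h2sm.contDiffAt]
  have hterm2 : ‖iteratedFDeriv ℝ n (⇑(B (u ρ₀)) ∘ v) ρ₀‖ ≤
      CG * ‖iteratedFDeriv ℝ (n + 1) g ρ₀‖ := by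
    rw [ContinuousLinearMap.iteratedFDeriv_comp_left (B (u ρ₀)) (hvsm.contDiffAt (x := ρ₀)) (by exact_mod_cast le_top)]
    refine (ContinuousLinearMap.norm_compContinuousMultilinearMap_le _ _).trans ?_
    have hb1 : ‖B (u ρ₀)‖ ≤ CG := by
      have hb : ‖B (u ρ₀)‖ ≤ ‖B‖ * ‖u ρ₀‖ := B.le_opNorm _
      have hB1 : ‖B‖ ≤ 1 := ContinuousLinearMap.norm_compL_le ℝ P P P
      have hu0 : ‖u ρ₀‖ ≤ CG := by
        have h := hCG 0 (Nat.zero_le _) (g ρ₀)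
        rwa [norm_iteratedFDeriv_zero] at h
      nlinarith [norm_nonneg (u ρ₀), norm_nonneg B]
    have h2 : ‖iteratedFDeriv ℝ n v ρ₀‖ = ‖iteratedFDeriv ℝ (n + 1) g ρ₀‖ :=
      norm_iteratedFDeriv_fderiv
    rw [h2]
    exact mul_le_mul_of_nonneg_right hb1 (norm_nonneg _)
  have hterm1 : ‖iteratedFDeriv ℝ n (fun x => B (u x - u ρ₀) (v x)) ρ₀‖ ≤
      ∑ i ∈ Finset.range (n + 1),
        (n.choose i : ℝ) * ((i.factorial : ℝ) * CG * M ^ i) * M := by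
    refine (B.norm_iteratedFDeriv_le_of_bilinear_of_le_one (husm.sub contDiff_const) hvsm ρ₀
      (by exact_mod_cast le_top) (ContinuousLinearMap.norm_compL_le ℝ P P P)).trans ?_
    refine Finset.sum_le_sum ?_
    intro i hi
    rcases Nat.eq_zero_or_pos i with h0 | h0
    · subst h0
      have hz : ‖iteratedFDeriv ℝ 0 (fun x => u x - u ρ₀) ρ₀‖ = 0 := by
        rw [norm_iteratedFDeriv_zero]
        simp
      rw [hz]
      have : (0:ℝ) ≤ (n.choose 0 : ℝ) * ((Nat.factorial 0 : ℝ) * CG * M ^ 0) * M := by positivity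
      simpa using this
    · have hiub : i ≤ n := Nat.lt_succ_iff.mp (Finset.mem_range.mp hi)
      have hDi : iteratedFDeriv ℝ i (fun x => u x - u ρ₀) ρ₀ = iteratedFDeriv ℝ i u ρ₀ := by
        have hconst : (fun x => u x - u ρ₀) = fun x => u x + (fun _ : P => -u ρ₀) x := by
          funext x; simp [sub_eq_add_neg]
        rw [hconst, iteratedFDeriv_add_apply' (husm.of_le (by exact_mod_cast le_top)).contDiffAt contDiff_const.contDiffAt,
          iteratedFDeriv_const_of_ne (Nat.pos_iff_ne_zero.mp h0)]
        simp
      have hui : ‖iteratedFDeriv ℝ i u ρ₀‖ ≤ (i.factorial : ℝ) * CG * M ^ i := by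
        refine norm_iteratedFDeriv_comp_le hGsm hg (by exact_mod_cast le_top) ρ₀ (C := CG) (D := M) ?_ ?_
        · intro j hj
          exact hCG j (hj.trans hiub) (g ρ₀)
        · intro j hj1 hji
          calc ‖iteratedFDeriv ℝ j g ρ₀‖ ≤ M := hlow j hj1 (hji.trans hiub)
            _ ≤ M ^ j := le_self_pow₀ hM (by omega)
      have hvni : ‖iteratedFDeriv ℝ (n - i) v ρ₀‖ ≤ M := by
        have h2 : ‖iteratedFDeriv ℝ (n - i) v ρ₀‖ = ‖iteratedFDeriv ℝ (n - i + 1) g ρ₀‖ :=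
          norm_iteratedFDeriv_fderiv
        rw [h2]
        exact hlow _ (by omega) (by omega)
      rw [hDi]
      have hcpos : (0:ℝ) ≤ (n.choose i : ℝ) := by positivity
      exact mul_le_mul (mul_le_mul_of_nonneg_left hui hcpos) hvni (norm_nonneg _)
        (by positivity)
  calc ‖iteratedFDeriv ℝ (n + 1) (fun y => F (g y)) ρ₀‖
      = ‖iteratedFDeriv ℝ n (fun x => B (u x - u ρ₀) (v x)) ρ₀ +
        iteratedFDeriv ℝ n (⇑(B (u ρ₀)) ∘ v) ρ₀‖ := key
    _ ≤ ‖iteratedFDeriv ℝ n (fun x => B (u x - u ρ₀) (v x)) ρ₀‖ +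
        ‖iteratedFDeriv ℝ n (⇑(B (u ρ₀)) ∘ v) ρ₀‖ := norm_add_le _ _
    _ ≤ (∑ i ∈ Finset.range (n + 1),
          (n.choose i : ℝ) * ((i.factorial : ℝ) * CG * M ^ i) * M) +
        CG * ‖iteratedFDeriv ℝ (n + 1) g ρ₀‖ := add_le_add hterm1 hterm2
    _ = CG * ‖iteratedFDeriv ℝ (n + 1) g ρ₀‖ +
        ∑ i ∈ Finset.range (n + 1),
          (n.choose i : ℝ) * ((i.factorial : ℝ) * CG * M ^ i) * M := by ring

/-- The inverse Riesz map as a real linear isometry equivalence. -/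
def iota (d : ℕ) : StrongDual ℝ (E d) ≃ₗᵢ[ℝ] E d :=
  { toLinearEquiv :=
      { toFun := fun l => (InnerProductSpace.toDual ℝ (E d)).symm l
        map_add' := fun l₁ l₂ => by simp
        map_smul' := fun c l => by simp
        invFun := fun x => InnerProductSpace.toDual ℝ (E d) x
        left_inv := fun l => by simp
        right_inv := fun x => by simp }
    norm_map' := fun l => by simp }

lemma gradient_eq_iota {d : ℕ} (V : E d → ℝ) :
    gradient V = ⇑(iota d) ∘ fderiv ℝ V := rfl

end Stmt4Aux

/-- Uniform bounds on the derivatives of the Hamiltonian flow; in particular `φᵗ`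
is Lipschitz uniformly in `t ∈ [0,T]`. -/
theorem stmt_4 (d : ℕ) (hd : 1 ≤ d) (V : E d → ℝ) (m : ℝ) (hV : AssumptionA V m)
    (φ : ℝ → E d × E d → E d × E d) (hφ : IsHamFlow V φ)
    (T : ℝ) (hT : 0 < T) (k : ℕ) (hk : 1 ≤ k) :
    (∃ C : ℝ, ∀ t ∈ Set.Icc (0:ℝ) T, ∀ ρ : E d × E d,
      ‖iteratedFDeriv ℝ k (φ t) ρ‖ ≤ C) ∧
    (∃ L : NNReal, ∀ t ∈ Set.Icc (0:ℝ) T, LipschitzWith L (φ t)) := by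
  obtain ⟨hφsm, hφ0, hφde⟩ := hφ
  obtain ⟨hVs, -, hm0, hm1, -, hderivs⟩ := hV
  -- smoothness of the gradient
  have hgsm : ContDiff ℝ (⊤ : ℕ∞) (gradient V) := by
    rw [Stmt4Aux.gradient_eq_iota]
    exact ((Stmt4Aux.iota d).toContinuousLinearEquiv.toContinuousLinearMap.contDiff).comp
      (hVs.fderiv_right (by simp))
  -- global bounds on derivatives of the gradient, of order ≥ 1
  have hgradbound : ∀ j : ℕ, 1 ≤ j → ∃ C : ℝ, 0 ≤ C ∧
      ∀ x : E d, ‖iteratedFDeriv ℝ j (gradient V) x‖ ≤ C := by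
    intro j hj
    obtain ⟨Ck, hCk0, hCkb⟩ := hderivs (j + 1)
    refine ⟨Ck, le_of_lt hCk0, fun x => ?_⟩
    have e1 : ‖iteratedFDeriv ℝ j (gradient V) x‖ = ‖iteratedFDeriv ℝ j (fderiv ℝ V) x‖ := by
      rw [Stmt4Aux.gradient_eq_iota]
      exact (Stmt4Aux.iota d).norm_iteratedFDeriv_comp_left (fderiv ℝ V) x j
    rw [e1, norm_iteratedFDeriv_fderiv]
    refine (hCkb x).trans ?_
    have hbase : (1:ℝ) ≤ 1 + ‖x‖ ^ 2 := by nlinarith [sq_nonneg ‖x‖]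
    have hexp : m - ((j + 1 : ℕ) : ℝ) / 2 ≤ 0 := by
      have h1 : (1:ℝ) ≤ (j : ℝ) := by exact_mod_cast hj
      push_cast
      linarith
    have hle1 := Real.rpow_le_one_of_one_le_of_nonpos hbase hexp
    exact mul_le_of_le_one_right (le_of_lt hCk0) hle1
  -- the vector field
  set Ffun : E d × E d → E d × E d := fun ρ => (ρ.2, -(gradient V ρ.1)) with hFdef
  have hFsm : ContDiff ℝ (⊤ : ℕ∞) Ffun := contDiff_snd.prodMk ((hgsm.comp contDiff_fst).neg)
  have hflowF : ∀ t ρ, HasDerivAt (fun s => φ s ρ) (Ffun (φ t ρ)) t := hφde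
  have hswap : ∀ (n : ℕ) (t : ℝ) (ρ : E d × E d),
      HasDerivAt (fun s => iteratedFDeriv ℝ n (φ s) ρ)
        (iteratedFDeriv ℝ n (fun y => Ffun (φ t y)) ρ) t := by
    intro n t ρ
    exact Stmt4Aux.swap_iter (B := fun q : ℝ × (E d × E d) => φ q.1 q.2)
      (C := fun q : ℝ × (E d × E d) => Ffun (φ q.1 q.2)) hφsm
      (fun t' ρ' => hflowF t' ρ') n t ρ
  have hφt : ∀ t, ContDiff ℝ (⊤ : ℕ∞) (φ t) := fun t => hφsm.comp (contDiff_const.prodMk contDiff_id)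
  -- global bounds on the derivatives of Ffun of each order ≥ 1
  have hFone : ∀ j : ℕ, 1 ≤ j → ∃ C : ℝ, 0 ≤ C ∧
      ∀ y : E d × E d, ‖iteratedFDeriv ℝ j Ffun y‖ ≤ C := by
    intro j hj
    obtain ⟨Cg, hCg0, hCgb⟩ := hgradbound j hj
    set A : (E d × E d) →L[ℝ] E d × E d :=
      (ContinuousLinearMap.snd ℝ (E d) (E d)).prod (0 : (E d × E d) →L[ℝ] E d) with hAdef
    set ι₂ : E d →L[ℝ] E d × E d := ContinuousLinearMap.inr ℝ (E d) (E d) with hι₂def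
    set fstc : (E d × E d) →L[ℝ] E d := ContinuousLinearMap.fst ℝ (E d) (E d) with hfstdef
    have hinner : ContDiff ℝ (⊤ : ℕ∞) (fun z : E d × E d => -(gradient V z.1)) :=
      (hgsm.comp contDiff_fst).neg
    refine ⟨‖A‖ + Cg, by positivity, fun y => ?_⟩
    have hsplit : Ffun = fun ρ => A ρ + (⇑ι₂ ∘ fun z : E d × E d => -(gradient V z.1)) ρ := by
      funext ρ
      simp [hFdef, hAdef, hι₂def, Prod.ext_iff]
    rw [hsplit, iteratedFDeriv_add_apply' (A.contDiff.of_le le_top).contDiffAt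
      ((ι₂.contDiff.comp hinner).of_le (by exact_mod_cast le_top)).contDiffAt]
    refine (norm_add_le _ _).trans (add_le_add ?_ ?_)
    · exact Stmt4Aux.norm_iteratedFDeriv_clm_le A hj y
    · rw [ContinuousLinearMap.iteratedFDeriv_comp_left ι₂ (hinner.contDiffAt (x := y)) (by exact_mod_cast le_top)]
      refine (ContinuousLinearMap.norm_compContinuousMultilinearMap_le _ _).trans ?_
      have hι₂n : ‖ι₂‖ ≤ 1 := by
        refine ContinuousLinearMap.opNorm_le_bound _ zero_le_one fun x => ?_
        rw [one_mul]
        simp only [hι₂def, ContinuousLinearMap.inr_apply]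
        rw [Prod.norm_def]
        simp
      have hin : ‖iteratedFDeriv ℝ j (fun z : E d × E d => -(gradient V z.1)) y‖ ≤ Cg := by
        have hcmp : iteratedFDeriv ℝ j (fun z : E d × E d => -(gradient V z.1)) y =
            (iteratedFDeriv ℝ j (fun x : E d => -(gradient V x)) y.1).compContinuousLinearMap
              (fun _ => fstc) :=
          ContinuousLinearMap.iteratedFDeriv_comp_right fstc hgsm.neg y (by exact_mod_cast le_top)
        rw [hcmp]
        refine (ContinuousMultilinearMap.norm_compContinuousLinearMap_le _ _).trans ?_
        have h1 : ‖iteratedFDeriv ℝ j (fun x : E d => -(gradient V x)) y.1‖ ≤ Cg := by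
          have hne : (fun x : E d => -(gradient V x)) = -(gradient V) := rfl
          rw [hne, iteratedFDeriv_neg_apply, norm_neg]
          exact hCgb y.1
        have h2 : (∏ _i : Fin j, ‖fstc‖) ≤ 1 := by
          apply Finset.prod_le_one (fun _ _ => norm_nonneg _) (fun _ _ => ?_)
          refine ContinuousLinearMap.opNorm_le_bound _ zero_le_one fun ρ => ?_
          rw [one_mul]
          simp only [hfstdef, ContinuousLinearMap.coe_fst']
          exact norm_fst_le ρ
        have h3 : (0:ℝ) ≤ ∏ _i : Fin j, ‖fstc‖ :=
          Finset.prod_nonneg (fun _ _ => norm_nonneg _)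
        nlinarith [norm_nonneg (iteratedFDeriv ℝ j (fun x : E d => -(gradient V x)) y.1)]
      nlinarith [norm_nonneg (iteratedFDeriv ℝ j (fun z : E d × E d => -(gradient V z.1)) y),
        norm_nonneg ι₂]
  -- uniform bound for all orders between 1 and N
  have hFsup : ∀ N : ℕ, ∃ C : ℝ, 1 ≤ C ∧ ∀ j : ℕ, 1 ≤ j → j ≤ N →
      ∀ y : E d × E d, ‖iteratedFDeriv ℝ j Ffun y‖ ≤ C := by
    intro N
    induction N with
    | zero => exact ⟨1, le_refl _, fun j hj hj0 => by omega⟩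
    | succ n IH =>
      obtain ⟨C, hC1, hCb⟩ := IH
      obtain ⟨C', hC'0, hC'b⟩ := hFone (n + 1) (by omega)
      refine ⟨max C C', le_trans hC1 (le_max_left _ _), ?_⟩
      intro j hj1 hjn y
      by_cases hc : j ≤ n
      · exact (hCb j hj1 hc y).trans (le_max_left _ _)
      · have hj' : j = n + 1 := by omega
        subst hj'
        exact (hC'b y).trans (le_max_right _ _)
  -- the main induction: uniform bounds on all derivatives of the flow
  have main : ∀ N : ℕ, ∃ M : ℝ, 1 ≤ M ∧ ∀ t ∈ Set.Icc (0:ℝ) T, ∀ ρ : E d × E d,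
      ∀ j : ℕ, 1 ≤ j → j ≤ N → ‖iteratedFDeriv ℝ j (φ t) ρ‖ ≤ M := by
    intro N
    induction N with
    | zero => exact ⟨1, le_refl _, fun t ht ρ j hj hjN => by omega⟩
    | succ n IH =>
      obtain ⟨M, hM1, hMb⟩ := IH
      obtain ⟨CF, hCF1, hCFb⟩ := hFsup (n + 1)
      have hCG : ∀ i : ℕ, i ≤ n → ∀ y : E d × E d,
          ‖iteratedFDeriv ℝ i (fderiv ℝ Ffun) y‖ ≤ CF := by
        intro i hi y
        rw [norm_iteratedFDeriv_fderiv]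
        exact hCFb (i + 1) (by omega) (by omega) y
      have hstar := Stmt4Aux.star hFsm n hCF1 hM1 hCG
      set ε : ℝ := ∑ i ∈ Finset.range (n + 1),
        (n.choose i : ℝ) * ((i.factorial : ℝ) * CF * M ^ i) * M with hεdef
      have hε0 : 0 ≤ ε := by
        apply Finset.sum_nonneg
        intro i _
        have h01 : (0:ℝ) ≤ CF := by linarith
        have h02 : (0:ℝ) ≤ M := by linarith
        positivity
      have hKpos : (0:ℝ) < CF := by linarith
      set Mk : ℝ := Real.exp (CF * T) + ε / CF * Real.exp (CF * T) with hMkdef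
      have hbound : ∀ t ∈ Set.Icc (0:ℝ) T, ∀ ρ₀ : E d × E d,
          ‖iteratedFDeriv ℝ (n + 1) (φ t) ρ₀‖ ≤ Mk := by
        intro t ht ρ₀
        have hgr := norm_le_gronwallBound_of_norm_deriv_right_le
          (f := fun s => iteratedFDeriv ℝ (n + 1) (φ s) ρ₀)
          (f' := fun s => iteratedFDeriv ℝ (n + 1) (fun y => Ffun (φ s y)) ρ₀)
          (δ := 1) (K := CF) (ε := ε) (a := 0) (b := T)
          ((continuous_iff_continuousAt.mpr
            (fun s => (hswap (n + 1) s ρ₀).continuousAt)).continuousOn)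
          (fun s _ => (hswap (n + 1) s ρ₀).hasDerivWithinAt)
          ?_ ?_ t ht
        · refine hgr.trans ?_
          rw [gronwallBound_of_K_ne_0 (ne_of_gt hKpos)]
          have h1 : Real.exp (CF * (t - 0)) ≤ Real.exp (CF * T) := by
            apply Real.exp_le_exp.mpr
            have := ht.1
            have := ht.2
            nlinarith
          have h2 : 0 ≤ ε / CF := div_nonneg hε0 (le_of_lt hKpos)
          have h3 : Real.exp (CF * (t - 0)) - 1 ≤ Real.exp (CF * T) := by linarith
          have h4 : ε / CF * (Real.exp (CF * (t - 0)) - 1) ≤ ε / CF * Real.exp (CF * T) := by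
            nlinarith
          rw [hMkdef]
          nlinarith
        · -- initial bound: φ 0 = id
          show ‖iteratedFDeriv ℝ (n + 1) (φ 0) ρ₀‖ ≤ 1
          have hid : φ 0 = fun ρ : E d × E d => ρ := funext hφ0
          rw [hid]
          have := Stmt4Aux.norm_iteratedFDeriv_clm_le
            (ContinuousLinearMap.id ℝ (E d × E d)) (j := n + 1) (by omega) ρ₀
          exact this.trans ContinuousLinearMap.norm_id_le
        · intro s hs
          exact hstar (φ s) (hφt s) ρ₀
            (fun j hj1 hjn => hMb s ⟨hs.1, le_of_lt hs.2⟩ ρ₀ j hj1 hjn)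
      refine ⟨max M Mk, le_trans hM1 (le_max_left _ _), ?_⟩
      intro t ht ρ j hj1 hjn
      by_cases hc : j ≤ n
      · exact (hMb t ht ρ j hj1 hc).trans (le_max_left _ _)
      · have hj' : j = n + 1 := by omega
        subst hj'
        exact (hbound t ht ρ).trans (le_max_right _ _)
  constructor
  · obtain ⟨M, hM1, hMb⟩ := main k
    exact ⟨M, fun t ht ρ => hMb t ht ρ k hk (le_refl k)⟩
  · obtain ⟨M, hM1, hMb⟩ := main 1
    refine ⟨⟨M, by linarith⟩, fun t ht => ?_⟩
    refine lipschitzWith_of_nnnorm_fderiv_le ((hφt t).differentiable (by simp)) (fun ρ => ?_)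
    have h1 : ‖fderiv ℝ (φ t) ρ‖ ≤ M := by
      rw [← Stmt4Aux.norm_iteratedFDeriv_one']
      exact hMb t ht ρ 1 (le_refl 1) (le_refl 1)
    apply NNReal.coe_le_coe.mp
    exact h1

end
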